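/- Let C be a binary projective three-weight linear code of length n, dimension k and minimum distance d, and suppose A_n(C) > 0. Then A_d(C) = A_{n−d}(C) = 2^{k−1} − 1, A_n(C) = 1, and A_i(C) = 0 for every i with 1 ≤ i ≤ n − 1 and i ∉ {d, n − d}; in particular the weight enumerator of C is P_C(z) = 1 + (2^{k−1} − 1)z^d + (2^{k−1} − 1)z^{n−d} + z^n. -/
import Mathlib


/-- Hamming weight of a binary vector: the number of nonzero coordinates. -/
noncomputable def wt {ι : Type*} (c : ι → ZMod 2) : ℕ := Nat.card {i : ι // c i ≠ 0}

/-- Number of codewords of Hamming weight `w` in a set of binary vectors. -/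
noncomputable def weightCount {ι : Type*} (C : Set (ι → ZMod 2)) (w : ℕ) : ℕ :=
  Nat.card {c : ι → ZMod 2 // c ∈ C ∧ wt c = w}

/-- The dual code: all vectors orthogonal (standard inner product) to every codeword. -/
def dualCode {ι : Type*} (C : Set (ι → ZMod 2)) : Set (ι → ZMod 2) :=
  {x | ∀ c ∈ C, ∑ᶠ i, x i * c i = 0}

/-- A code is projective if the minimum distance of its dual is at least 3. -/
def IsProjective {ι : Type*} (C : Set (ι → ZMod 2)) : Prop :=
  ∀ x ∈ dualCode C, x ≠ 0 → 3 ≤ wt x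

/-- `d` is the minimum distance of `C`: the least Hamming weight of a nonzero codeword. -/
def IsMinDist {ι : Type*} (C : Set (ι → ZMod 2)) (d : ℕ) : Prop :=
  (∃ c ∈ C, c ≠ 0 ∧ wt c = d) ∧ ∀ c ∈ C, c ≠ 0 → d ≤ wt c

/-- The number of nonzero Hamming weights occurring among codewords of `C`. -/
noncomputable def numNonzeroWeights {ι : Type*} (C : Set (ι → ZMod 2)) : ℕ :=
  Nat.card {i : ℕ | 1 ≤ i ∧ weightCount C i ≠ 0}

/-- The codewords of weight `w` in `C` hold a 2-design with index `lam`: every pair of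
distinct coordinate positions lies in the support of exactly `lam` codewords of weight `w`. -/
def HoldsTwoDesign {ι : Type*} (C : Set (ι → ZMod 2)) (w lam : ℕ) : Prop :=
  ∀ p q : ι, p ≠ q →
    Nat.card {c : ι → ZMod 2 // c ∈ C ∧ wt c = w ∧ c p ≠ 0 ∧ c q ≠ 0} = lam

section Aux

open Finset

variable {n : ℕ}

/-- The all-ones vector. -/
def allones (n : ℕ) : Fin n → ZMod 2 := fun _ => 1

lemma wt_eq_card (c : Fin n → ZMod 2) :
    wt c = (Finset.univ.filter fun i => c i ≠ 0).card := by
  classical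
  rw [wt, Nat.card_eq_fintype_card, Fintype.card_subtype]

lemma wt_le (c : Fin n → ZMod 2) : wt c ≤ n := by
  classical
  rw [wt_eq_card]
  have := Finset.card_filter_le (Finset.univ : Finset (Fin n)) (fun i => c i ≠ 0)
  simpa using this

lemma wt_eq_zero_iff (c : Fin n → ZMod 2) : wt c = 0 ↔ c = 0 := by
  classical
  rw [wt_eq_card, Finset.card_eq_zero, Finset.filter_eq_empty_iff]
  constructor
  · intro h; funext i
    have := h (Finset.mem_univ i)
    simpa using this
  · intro h i _
    simp [h]

lemma wt_zero : wt (0 : Fin n → ZMod 2) = 0 := (wt_eq_zero_iff 0).mpr rfl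

lemma wt_eq_n_iff (c : Fin n → ZMod 2) : wt c = n ↔ c = allones n := by
  classical
  rw [wt_eq_card]
  constructor
  · intro h
    have huniv : (Finset.univ.filter fun i => c i ≠ 0) = Finset.univ := by
      apply Finset.eq_univ_of_card
      simpa using h
    funext i
    have : c i ≠ 0 := by
      have := huniv ▸ Finset.mem_univ i
      exact (Finset.mem_filter.mp this).2
    have h2 : ∀ a : ZMod 2, a ≠ 0 → a = 1 := by decide
    exact h2 _ this
  · intro h
    subst h
    have : (Finset.univ.filter fun i : Fin n => allones n i ≠ 0) = Finset.univ := by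
      apply Finset.eq_univ_of_forall
      intro i
      simp [allones]
    rw [this, Finset.card_univ, Fintype.card_fin]

lemma wt_allones : wt (allones n) = n := (wt_eq_n_iff _).mpr rfl

lemma wt_one_add (c : Fin n → ZMod 2) : wt (allones n + c) = n - wt c := by
  classical
  have key : ∀ a : ZMod 2, ((1 : ZMod 2) + a ≠ 0) ↔ ¬(a ≠ 0) := by decide
  rw [wt_eq_card, wt_eq_card]
  have : (Finset.univ.filter fun i => (allones n + c) i ≠ 0)
      = Finset.univ.filter fun i => ¬(c i ≠ 0) := by
    apply Finset.filter_congr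
    intro i _
    simp only [allones, Pi.add_apply]
    exact key (c i)
  rw [this]
  have := Finset.card_filter_add_card_filter_not
    (s := (Finset.univ : Finset (Fin n))) (p := fun i => c i ≠ 0)
  simp only [Finset.card_univ, Fintype.card_fin] at this
  omega

lemma allones_add_allones_add (c : Fin n → ZMod 2) : allones n + (allones n + c) = c := by
  funext i
  simp only [allones, Pi.add_apply, ← add_assoc]
  have : (1 : ZMod 2) + 1 = 0 := by decide
  rw [this, zero_add]

lemma weightCount_ne_zero_iff (C : Set (Fin n → ZMod 2)) (w : ℕ) :
    weightCount C w ≠ 0 ↔ ∃ c ∈ C, wt c = w := by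
  rw [weightCount, Nat.card_ne_zero]
  constructor
  · rintro ⟨⟨c, hc1, hc2⟩, -⟩; exact ⟨c, hc1, hc2⟩
  · rintro ⟨c, h1, h2⟩; exact ⟨⟨⟨c, h1, h2⟩⟩, inferInstance⟩

lemma weightCount_symm (C : Submodule (ZMod 2) (Fin n → ZMod 2))
    (h1 : allones n ∈ C) (w : ℕ) (hw : w ≤ n) :
    weightCount (C : Set (Fin n → ZMod 2)) w = weightCount (C : Set (Fin n → ZMod 2)) (n - w) := by
  apply Nat.card_congr
  refine ⟨fun c => ⟨allones n + c.1, C.add_mem h1 c.2.1, by rw [wt_one_add, c.2.2]⟩,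
          fun c => ⟨allones n + c.1, C.add_mem h1 c.2.1, by rw [wt_one_add, c.2.2]; omega⟩,
          ?_, ?_⟩
  · intro c; apply Subtype.ext; exact allones_add_allones_add c.1
  · intro c; apply Subtype.ext; exact allones_add_allones_add c.1

lemma weightCount_eq_card (C : Set (Fin n → ZMod 2)) (w : ℕ) [DecidablePred (· ∈ C)] :
    weightCount C w = (Finset.univ.filter fun c => c ∈ C ∧ wt c = w).card := by
  classical
  rw [weightCount, Nat.card_eq_fintype_card, Fintype.card_subtype]

end Aux

theorem weight_distribution_of_projective_three_weight (n k d : ℕ) (C : Submodule (ZMod 2) (Fin n → ZMod 2))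
    (hk : Module.finrank (ZMod 2) C = k)
    (hd : IsMinDist (C : Set (Fin n → ZMod 2)) d)
    (hproj : IsProjective (C : Set (Fin n → ZMod 2)))
    (h3 : numNonzeroWeights (C : Set (Fin n → ZMod 2)) = 3)
    (hAn : 0 < weightCount (C : Set (Fin n → ZMod 2)) n) :
    weightCount (C : Set (Fin n → ZMod 2)) d = 2 ^ (k - 1) - 1 ∧
    weightCount (C : Set (Fin n → ZMod 2)) (n - d) = 2 ^ (k - 1) - 1 ∧
    weightCount (C : Set (Fin n → ZMod 2)) n = 1 ∧
    ∀ i : ℕ, 1 ≤ i → i ≤ n - 1 → i ≠ d → i ≠ n - d →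
      weightCount (C : Set (Fin n → ZMod 2)) i = 0 := by
  classical
  set Cs := (C : Set (Fin n → ZMod 2)) with hCsdef
  set S := {i : ℕ | 1 ≤ i ∧ weightCount Cs i ≠ 0} with hSdef
  have hS3 : S.ncard = 3 := by
    rw [← Nat.card_coe_set_eq]; exact h3
  have hSfin : S.Finite := by
    apply (Set.finite_Iic n).subset
    rintro i ⟨hi1, hi2⟩
    obtain ⟨c, -, hcw⟩ := (weightCount_ne_zero_iff Cs i).mp hi2
    exact Set.mem_Iic.mpr (hcw ▸ wt_le c)
  -- membership characterization of S
  have hmem : ∀ i : ℕ, i ∈ S ↔ ∃ c ∈ Cs, c ≠ 0 ∧ wt c = i := by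
    intro i
    constructor
    · rintro ⟨hi1, hi2⟩
      obtain ⟨c, hc, hw⟩ := (weightCount_ne_zero_iff Cs i).mp hi2
      refine ⟨c, hc, ?_, hw⟩
      intro h0
      rw [h0, wt_zero] at hw
      omega
    · rintro ⟨c, hc, h0, hw⟩
      refine ⟨?_, (weightCount_ne_zero_iff Cs i).mpr ⟨c, hc, hw⟩⟩
      by_contra h
      have : i = 0 := by omega
      rw [this] at hw
      exact h0 ((wt_eq_zero_iff c).mp hw)
  -- the all-ones vector is in C
  obtain ⟨c1, hc1C, hc1w⟩ := (weightCount_ne_zero_iff Cs n).mp hAn.ne'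
  have h1C : allones n ∈ C := by
    have := (wt_eq_n_iff c1).mp hc1w
    rwa [this] at hc1C
  obtain ⟨⟨c0, hc0C, hc0ne, hc0w⟩, hdle⟩ := hd
  have hd1 : 1 ≤ d := by
    by_contra h
    have : d = 0 := by omega
    rw [this] at hc0w
    exact hc0ne ((wt_eq_zero_iff c0).mp hc0w)
  have hdn : d ≤ n := hc0w ▸ wt_le c0
  have hdS : d ∈ S := (hmem d).mpr ⟨c0, hc0C, hc0ne, hc0w⟩
  -- d < n
  have hdltn : d < n := by
    by_contra h
    push_neg at h
    have hsub : S ⊆ {n} := by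
      intro i hi
      obtain ⟨c, hcC, hcne, hcw⟩ := (hmem i).mp hi
      have h1 := hdle c hcC hcne
      have h2 := wt_le c
      simp only [Set.mem_singleton_iff]
      omega
    have := Set.ncard_le_ncard hsub (Set.finite_singleton n)
    rw [hS3, Set.ncard_singleton] at this
    omega
  have hn1 : 1 ≤ n := by omega
  have hnS : n ∈ S := (hmem n).mpr ⟨c1, hc1C, by
    intro h0; rw [h0, wt_zero] at hc1w; omega, hc1w⟩
  have hndS : n - d ∈ S := by
    refine (hmem (n - d)).mpr ⟨allones n + c0, C.add_mem h1C hc0C, ?_, by rw [wt_one_add, hc0w]⟩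
    intro h0
    have := wt_one_add c0
    rw [h0, wt_zero, hc0w] at this
    omega
  -- d ≠ n - d
  have hdnd : d ≠ n - d := by
    intro heq
    have hex : ∃ w ∈ S, w ≠ d ∧ w ≠ n := by
      by_contra h
      push_neg at h
      have hsub : S ⊆ {d, n} := by
        intro i hi
        rcases eq_or_ne i d with h1 | h1
        · simp [h1]
        · simp [h i hi h1]
      have hle := Set.ncard_le_ncard hsub (Set.toFinite _)
      have h2 := Set.ncard_insert_le d ({n} : Set ℕ)
      rw [Set.ncard_singleton] at h2
      rw [hS3] at hle
      omega
    obtain ⟨w, hwS, hwd, hwn⟩ := hex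
    obtain ⟨c, hcC, hcne, hcw⟩ := (hmem w).mp hwS
    have hw1 : 1 ≤ w := hwS.1
    have hwle : w ≤ n := hcw ▸ wt_le c
    have hnwS : n - w ∈ S := by
      refine (hmem (n - w)).mpr ⟨allones n + c, C.add_mem h1C hcC, ?_, by rw [wt_one_add, hcw]⟩
      intro h0
      have := wt_one_add c
      rw [h0, wt_zero, hcw] at this
      omega
    have hsub : ({d, n, w, n - w} : Set ℕ) ⊆ S := by
      intro i hi
      rcases hi with h | h | h | h
      · exact h ▸ hdS
      · exact h ▸ hnS
      · exact h ▸ hwS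
      · exact h ▸ hnwS
    have hcard4 : ({d, n, w, n - w} : Set ℕ).ncard = 4 := by
      rw [Set.ncard_insert_of_notMem (by simp; omega),
          Set.ncard_insert_of_notMem (by simp; omega),
          Set.ncard_insert_of_notMem (by simp; omega),
          Set.ncard_singleton]
    have := Set.ncard_le_ncard hsub hSfin
    rw [hS3, hcard4] at this
    omega
  have hnd1 : 1 ≤ n - d := by omega
  have hndn : n - d ≠ n := by omega
  -- S = {d, n - d, n}
  have hSeq : S = {d, n - d, n} := by
    symm
    apply Set.eq_of_subset_of_ncard_le _ _ hSfin
    · intro i hi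
      rcases hi with h | h | h
      · exact h ▸ hdS
      · exact h ▸ hndS
      · exact h ▸ hnS
    · rw [hS3]
      have h3c : ({d, n - d, n} : Set ℕ).ncard = 3 := by
        rw [Set.ncard_insert_of_notMem (by simp; omega),
            Set.ncard_insert_of_notMem (by simp; omega), Set.ncard_singleton]
      omega
  -- vanishing outside {d, n-d, n}
  have hvanish : ∀ i : ℕ, 1 ≤ i → i ≠ d → i ≠ n - d → i ≠ n → weightCount Cs i = 0 := by
    intro i h1 h2 h3' h4
    by_contra h
    have : i ∈ S := ⟨h1, h⟩
    rw [hSeq] at this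
    rcases this with h | h | h <;> simp_all
  -- weightCount Cs n = 1
  have hAn1 : weightCount Cs n = 1 := by
    rw [weightCount, Nat.card_eq_one_iff_unique]
    constructor
    · constructor
      rintro ⟨a, haC, haw⟩ ⟨b, hbC, hbw⟩
      apply Subtype.ext
      show a = b
      rw [(wt_eq_n_iff a).mp haw, (wt_eq_n_iff b).mp hbw]
    · exact ⟨⟨allones n, h1C, wt_allones⟩⟩
  -- weightCount Cs 0 = 1
  have hA0 : weightCount Cs 0 = 1 := by
    rw [weightCount, Nat.card_eq_one_iff_unique]
    constructor
    · constructor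
      rintro ⟨a, haC, haw⟩ ⟨b, hbC, hbw⟩
      apply Subtype.ext
      show a = b
      rw [(wt_eq_zero_iff a).mp haw, (wt_eq_zero_iff b).mp hbw]
    · exact ⟨⟨0, C.zero_mem, wt_zero⟩⟩
  -- symmetry
  have hsymm : weightCount Cs d = weightCount Cs (n - d) := weightCount_symm C h1C d hdn
  -- counting
  have hcardC : (Finset.univ.filter (· ∈ Cs)).card = 2 ^ k := by
    rw [← Fintype.card_subtype]
    have h2 := Module.card_eq_pow_finrank (K := ZMod 2) (V := ↥C)
    rw [ZMod.card, hk] at h2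
    exact h2
  have hfib : (Finset.univ.filter (· ∈ Cs)).card
      = ∑ w ∈ Finset.range (n + 1), weightCount Cs w := by
    rw [Finset.card_eq_sum_card_fiberwise
      (f := wt) (t := Finset.range (n + 1))
      (fun c _ => Finset.mem_range.mpr (Nat.lt_succ_of_le (wt_le c)))]
    apply Finset.sum_congr rfl
    intro w _
    rw [weightCount_eq_card, Finset.filter_filter]
  have hsum4 : ∑ w ∈ Finset.range (n + 1), weightCount Cs w
      = weightCount Cs 0 + (weightCount Cs d + (weightCount Cs (n - d) + weightCount Cs n)) := by
    rw [← Finset.sum_subset (s₁ := ({0, d, n - d, n} : Finset ℕ))]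
    · rw [Finset.sum_insert (by simp; omega), Finset.sum_insert (by simp; omega),
          Finset.sum_insert (by simp; omega), Finset.sum_singleton]
    · intro x hx
      simp only [Finset.mem_insert, Finset.mem_singleton] at hx
      rcases hx with h | h | h | h <;> simp [h, Finset.mem_range] <;> omega
    · intro x hx hx'
      simp only [Finset.mem_insert, Finset.mem_singleton, not_or] at hx'
      obtain ⟨h0, h1, h2, h3'⟩ := hx'
      exact hvanish x (by omega) h1 h2 h3'
  have hkey : 2 ^ k = 2 + 2 * weightCount Cs d := by
    rw [← hcardC, hfib, hsum4, hA0, hAn1, ← hsymm]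
    ring
  have hk1 : 1 ≤ k := by
    by_contra h
    have : k = 0 := by omega
    rw [this] at hkey
    omega
  obtain ⟨m, rfl⟩ : ∃ m, k = m + 1 := ⟨k - 1, by omega⟩
  rw [pow_succ] at hkey
  have hAd : weightCount Cs d = 2 ^ (m + 1 - 1) - 1 := by
    simp only [Nat.add_sub_cancel]
    omega
  refine ⟨hAd, hsymm ▸ hAd, hAn1, ?_⟩
  intro i h1 h2 h3' h4
  exact hvanish i h1 h3' h4 (by omega)
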